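/- arXiv:2302.10685 — 8 statements merged into one kernel-verified Lean document; each statement's English description precedes it below -/
import Mathlib

section
/- Under the same setup (IF neuron with v(0) = θ/2, soft reset at threshold θ, ANN output a = (θ/T)·clip(⌊S·T/θ + 1/2⌋, 0, T) with S = ∑_{t=1}^T I(t), and SNN output φ(T) = (θ/T)·∑_{t=1}^T s(t)): if φ(T) < θ and v(T) ≥ θ, then φ(T) < a. -/
open Finset

/-- Residual membrane potential of an IF neuron with soft reset:
`v 0 = v0`, `v t = v (t-1) + I t - s t * θ` where `s t = 1` iff `v (t-1) + I t ≥ θ`. -/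
noncomputable def ifV (θ v0 : ℝ) (I : ℕ → ℝ) : ℕ → ℝ
  | 0 => v0
  | t + 1 => ifV θ v0 I t + I (t + 1) -
      (if θ ≤ ifV θ v0 I t + I (t + 1) then θ else 0)

/-- Binary spike (as a real number) of the IF neuron at time-step `t ≥ 1`. -/
noncomputable def ifS (θ v0 : ℝ) (I : ℕ → ℝ) (t : ℕ) : ℝ :=
  if θ ≤ ifV θ v0 I (t - 1) + I t then 1 else 0

lemma ifV_eq (θ v0 : ℝ) (I : ℕ → ℝ) (T : ℕ) :
    ifV θ v0 I T = v0 + ∑ t ∈ Finset.Icc 1 T, I t - θ * ∑ t ∈ Finset.Icc 1 T, ifS θ v0 I t := by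
  induction T with
  | zero => simp [ifV]
  | succ n ih =>
      rw [Finset.sum_Icc_succ_top (by omega : 1 ≤ n + 1),
        Finset.sum_Icc_succ_top (by omega : 1 ≤ n + 1)]
      have hs : ifS θ v0 I (n + 1) = if θ ≤ ifV θ v0 I n + I (n + 1) then 1 else 0 := by
        simp [ifS]
      rw [ifV, hs]
      by_cases h : θ ≤ ifV θ v0 I n + I (n + 1)
      · rw [if_pos h, if_pos h, ih]; ring
      · rw [if_neg h, if_neg h, ih]; ring

theorem stmt2 (θ : ℝ) (hθ : 0 < θ) (T : ℕ) (hT : 0 < T) (I : ℕ → ℝ)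
    (S a φ : ℝ)
    (hS : S = ∑ t ∈ Finset.Icc 1 T, I t)
    (ha : a = (θ / T) * ((min (max (⌊S * T / θ + 1 / 2⌋) 0) (T : ℤ) : ℤ) : ℝ))
    (hφ : φ = (θ / T) * ∑ t ∈ Finset.Icc 1 T, ifS θ (θ / 2) I t)
    (hφθ : φ < θ) (hv : θ ≤ ifV θ (θ / 2) I T) :
    φ < a := by
  set k : ℕ := (Finset.Icc 1 T).filter (fun t => θ ≤ ifV θ (θ/2) I (t - 1) + I t) |>.card with hk
  have hsum : ∑ t ∈ Finset.Icc 1 T, ifS θ (θ/2) I t = (k : ℝ) := by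
    rw [hk]
    simp [ifS, Finset.sum_boole]
  have hkT : k ≤ T := by
    have := Finset.card_filter_le (Finset.Icc 1 T)
      (fun t => θ ≤ ifV θ (θ/2) I (t - 1) + I t)
    simpa using this
  have hTpos : (0:ℝ) < T := by exact_mod_cast hT
  have hdiv : 0 < θ / T := div_pos hθ hTpos
  -- k < T
  have hkltT : k < T := by
    by_contra h
    have : k = T := le_antisymm hkT (by omega)
    rw [hφ, hsum, this] at hφθ
    rw [div_mul_cancel₀ θ (ne_of_gt hTpos)] at hφθ
    exact lt_irrefl θ hφθ
  -- from hv: S ≥ θ/2 + θ k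
  have hV := ifV_eq θ (θ/2) I T
  rw [hV, hsum, ← hS] at hv
  have hSge : θ / 2 + θ * k ≤ S := by linarith
  -- floor bound
  have hfloor : (k : ℤ) + 1 ≤ ⌊S * T / θ + 1 / 2⌋ := by
    rw [Int.le_floor]
    push_cast
    have h1 : (θ/2 + θ*k) * T / θ ≤ S * T / θ := by
      gcongr
    have h2 : (θ/2 + θ*k) * T / θ = (1/2 + k) * T := by
      field_simp
    have hkT' : (1:ℝ) ≤ T := by exact_mod_cast hT
    have h3 : (1/2 + (k:ℝ)) ≤ (1/2 + k) * T := by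
      nlinarith [Nat.cast_nonneg (α := ℝ) k]
    linarith
  have hclip : (k : ℤ) + 1 ≤ min (max (⌊S * T / θ + 1 / 2⌋) 0) (T : ℤ) := by
    have : (k:ℤ) + 1 ≤ (T:ℤ) := by exact_mod_cast hkltT
    omega
  have hclipR : (k : ℝ) + 1 ≤ ((min (max (⌊S * T / θ + 1 / 2⌋) 0) (T : ℤ) : ℤ) : ℝ) := by
    exact_mod_cast hclip
  rw [hφ, hsum, ha]
  have := mul_lt_mul_of_pos_left (lt_of_lt_of_le (by linarith : (k:ℝ) < k + 1) hclipR) hdiv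
  exact this
end

section
/- Let θ > 0, T a positive integer, IF neuron with v(0) = θ/2 and total input S = ∑_{t=1}^T I(t) with -θ/2 ≤ S < θT + θ/2. If the offset spike ψ = ⌊S/θ + 1/2⌋ - ∑_{t=1}^T s(t) is an integer and v(T)/θ ∈ [k, k+1) for some integer k, then ψ = k. -/
open Finset

theorem stmt4 (θ : ℝ) (hθ : 0 < θ) (T : ℕ) (hT : 0 < T) (I : ℕ → ℝ)
    (S ψ : ℝ) (k : ℤ)
    (hS : S = ∑ t ∈ Finset.Icc 1 T, I t)
    (hS1 : -θ / 2 ≤ S) (hS2 : S < θ * T + θ / 2)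
    (hψ : ψ = (⌊S / θ + 1 / 2⌋ : ℝ) - ∑ t ∈ Finset.Icc 1 T, ifS θ (θ / 2) I t)
    (hk1 : (k : ℝ) ≤ ifV θ (θ / 2) I T / θ)
    (hk2 : ifV θ (θ / 2) I T / θ < (k : ℝ) + 1) :
    ψ = (k : ℝ) := by
  classical
  -- conservation law
  have key : ∀ t : ℕ, ifV θ (θ/2) I t + θ * ∑ i ∈ Finset.Icc 1 t, ifS θ (θ/2) I i
      = θ/2 + ∑ i ∈ Finset.Icc 1 t, I i := by
    intro t
    induction t with
    | zero => simp [ifV]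
    | succ n ih =>
      rw [Finset.sum_Icc_succ_top (by omega : 1 ≤ n + 1),
          Finset.sum_Icc_succ_top (by omega : 1 ≤ n + 1)]
      have hs : ifS θ (θ/2) I (n+1) = if θ ≤ ifV θ (θ/2) I n + I (n+1) then 1 else 0 := by
        simp [ifS]
      rw [show ifV θ (θ/2) I (n+1) = ifV θ (θ/2) I n + I (n+1) -
          (if θ ≤ ifV θ (θ/2) I n + I (n+1) then θ else 0) from rfl, hs]
      by_cases h : θ ≤ ifV θ (θ/2) I n + I (n+1) <;> simp [h] <;> linarith
  -- the spike sum is a natural number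
  obtain ⟨N, hN⟩ : ∃ N : ℕ, ∑ i ∈ Finset.Icc 1 T, ifS θ (θ/2) I i = (N : ℝ) := by
    refine ⟨((Finset.Icc 1 T).filter fun t => θ ≤ ifV θ (θ/2) I (t-1) + I t).card, ?_⟩
    rw [← Finset.sum_boole]
    simp [ifS]
  have hv := key T
  rw [hN, ← hS] at hv
  have hdiv : S / θ + 1 / 2 = ifV θ (θ/2) I T / θ + (N : ℝ) := by
    have h2 : ifV θ (θ/2) I T = θ/2 + S - θ * N := by linarith
    rw [h2]
    field_simp
    ring
  have hfloor : ⌊ifV θ (θ/2) I T / θ⌋ = k :=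
    Int.floor_eq_iff.mpr ⟨hk1, hk2⟩
  rw [hψ, hN, hdiv, Int.floor_add_natCast, hfloor]
  push_cast
  ring
end

section
/- Consider an IF neuron with threshold θ > 0, inputs I(1),...,I(T), initial potential v(0), spike train s(t) and residual potentials v(t), and suppose there exists t with s(t) = 0. Fix ε ∈ (0, θ) and define a second neuron with the same inputs but initial potential ṽ(0) = v(0) + max(θ, θ + ε - max{v(t) : s(t) = 0}). Then there exists t₀ ∈ {1,...,T} such that ∑_{k=1}^{t₀} s(k) = ∑_{k=1}^{t₀} s̃(k) - 1, where s̃ is the spike train of the second neuron. -/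
open Finset

theorem stmt7 (θ : ℝ) (hθ : 0 < θ) (T : ℕ) (hT : 0 < T) (I : ℕ → ℝ)
    (v0 ε : ℝ) (hε : ε ∈ Set.Ioo 0 θ)
    (F : Finset ℕ)
    (hF : F = (Finset.Icc 1 T).filter (fun t => ifS θ v0 I t = 0))
    (hne : F.Nonempty)
    (w0 : ℝ)
    (hw : w0 = v0 + max θ (θ + ε - F.sup' hne (fun t => ifV θ v0 I t))) :
    ∃ t0 ∈ Finset.Icc 1 T,
      ∑ k ∈ Finset.Icc 1 t0, ifS θ v0 I k =
        ∑ k ∈ Finset.Icc 1 t0, ifS θ w0 I k - 1 := by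
  obtain ⟨hε0, hεθ⟩ := hε
  set M := F.sup' hne (fun t => ifV θ v0 I t) with hM
  set δ := max θ (θ + ε - M) with hδ
  have hδθ : θ ≤ δ := le_max_left _ _
  have hδM : θ + ε - M ≤ δ := le_max_right _ _
  have hw0 : w0 = v0 + δ := hw
  have key : ∀ t : ℕ,
      (ifV θ w0 I t = ifV θ v0 I t + δ ∧
        ∑ k ∈ Finset.Icc 1 t, ifS θ v0 I k = ∑ k ∈ Finset.Icc 1 t, ifS θ w0 I k) ∨
      (∃ t0 ∈ Finset.Icc 1 t,
        ∑ k ∈ Finset.Icc 1 t0, ifS θ v0 I k =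
          ∑ k ∈ Finset.Icc 1 t0, ifS θ w0 I k - 1) := by
    intro t
    induction t with
    | zero =>
      left
      refine ⟨?_, by simp⟩
      simp [ifV, hw0]
    | succ t ih =>
      rcases ih with ⟨hV, hS⟩ | h2
      · by_cases h1 : θ ≤ ifV θ v0 I t + I (t + 1)
        · left
          have h2' : θ ≤ ifV θ w0 I t + I (t + 1) := by rw [hV]; linarith
          constructor
          · show ifV θ w0 I t + I (t + 1) - _ = ifV θ v0 I t + I (t + 1) - _ + δ
            rw [if_pos h2', if_pos h1, hV]; ring
          · rw [Finset.sum_Icc_succ_top (by omega : 1 ≤ t + 1),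
              Finset.sum_Icc_succ_top (by omega : 1 ≤ t + 1), hS]
            unfold ifS
            simp only [Nat.add_sub_cancel, if_pos h1, if_pos h2']
        · by_cases h2' : θ ≤ ifV θ w0 I t + I (t + 1)
          · right
            refine ⟨t + 1, Finset.mem_Icc.mpr ⟨by omega, le_rfl⟩, ?_⟩
            rw [Finset.sum_Icc_succ_top (by omega : 1 ≤ t + 1),
              Finset.sum_Icc_succ_top (by omega : 1 ≤ t + 1), hS]
            unfold ifS
            simp only [Nat.add_sub_cancel, if_neg h1, if_pos h2']
            ring
          · left
            constructor
            · show ifV θ w0 I t + I (t + 1) - _ = ifV θ v0 I t + I (t + 1) - _ + δ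
              rw [if_neg h2', if_neg h1, hV]; ring
            · rw [Finset.sum_Icc_succ_top (by omega : 1 ≤ t + 1),
                Finset.sum_Icc_succ_top (by omega : 1 ≤ t + 1), hS]
              unfold ifS
              simp only [Nat.add_sub_cancel, if_neg h1, if_neg h2']
      · right
        obtain ⟨t0, ht0, h⟩ := h2
        rw [Finset.mem_Icc] at ht0
        exact ⟨t0, Finset.mem_Icc.mpr ⟨ht0.1, ht0.2.trans (Nat.le_succ t)⟩, h⟩
  obtain ⟨ts, htsF, hts⟩ := Finset.exists_mem_eq_sup' hne (fun t => ifV θ v0 I t)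
  have hMts : M = ifV θ v0 I ts := hts
  have htsF' := htsF
  rw [hF, Finset.mem_filter, Finset.mem_Icc] at htsF'
  obtain ⟨⟨hts1, htsT⟩, htsS⟩ := htsF'
  obtain ⟨k, rfl⟩ : ∃ k, ts = k + 1 := ⟨ts - 1, by omega⟩
  -- s(ts) = 0 means no spike of the first neuron at ts
  have hno : ¬ θ ≤ ifV θ v0 I k + I (k + 1) := by
    intro h
    unfold ifS at htsS
    rw [Nat.add_sub_cancel, if_pos h] at htsS
    norm_num at htsS
  rcases key k with ⟨hV, hS⟩ | h2
  · -- the second neuron spikes at ts while the first does not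
    have hVts : ifV θ v0 I (k + 1) = ifV θ v0 I k + I (k + 1) := by
      show ifV θ v0 I k + I (k + 1) - _ = _
      rw [if_neg hno]; ring
    have hMeq : M = ifV θ v0 I k + I (k + 1) := by rw [hMts, hVts]
    have hyes : θ ≤ ifV θ w0 I k + I (k + 1) := by
      rw [hV]
      have : θ + ε ≤ M + δ := by linarith
      rw [hMeq] at this
      linarith
    refine ⟨k + 1, Finset.mem_Icc.mpr ⟨by omega, htsT⟩, ?_⟩
    rw [Finset.sum_Icc_succ_top (by omega : 1 ≤ k + 1),
      Finset.sum_Icc_succ_top (by omega : 1 ≤ k + 1), hS]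
    unfold ifS
    simp only [Nat.add_sub_cancel, if_neg hno, if_pos hyes]
    ring
  · obtain ⟨t0, ht0, h⟩ := h2
    rw [Finset.mem_Icc] at ht0
    exact ⟨t0, Finset.mem_Icc.mpr ⟨ht0.1, by omega⟩, h⟩
end

section
/- Consider an IF neuron with threshold θ > 0, inputs I(1),...,I(T), initial potential v(0), and spike train s(t) with at least one spike. Fix ε ∈ (0, θ) and suppose θ ≥ min{v(t) : s(t)=1} + ε, so that ṽ(0) = v(0) - θ. Let s̃ be the spike train of the neuron with initial potential ṽ(0) and the same inputs. If for some t_s we have ∑_{k=1}^{t_s} s(k) = ∑_{k=1}^{t_s} s̃(k) + 1, then the pre-spike potentials coincide at time t_s + 1, i.e., m(t_s+1) = m̃(t_s+1), and consequently s(k) = s̃(k) for all k > t_s. In particular ∑_{k=1}^T s(k) = ∑_{k=1}^T s̃(k) + 1. -/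
open Finset

theorem stmt8 (θ : ℝ) (hθ : 0 < θ) (T : ℕ) (hT : 0 < T) (I : ℕ → ℝ)
    (v0 ε : ℝ) (hε : ε ∈ Set.Ioo 0 θ)
    (F : Finset ℕ)
    (hF : F = (Finset.Icc 1 T).filter (fun t => ifS θ v0 I t = 1))
    (hne : F.Nonempty)
    (hsmall : F.inf' hne (fun t => ifV θ v0 I t) + ε ≤ θ)
    (w0 : ℝ) (hw : w0 = v0 - θ)
    (ts : ℕ) (hts : ts ∈ Finset.Icc 1 T)
    (hcount : ∑ k ∈ Finset.Icc 1 ts, ifS θ v0 I k =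
      ∑ k ∈ Finset.Icc 1 ts, ifS θ w0 I k + 1) :
    (ifV θ v0 I ts + I (ts + 1) = ifV θ w0 I ts + I (ts + 1)) ∧
    (∀ k, ts < k → k ≤ T → ifS θ v0 I k = ifS θ w0 I k) ∧
    ∑ k ∈ Finset.Icc 1 T, ifS θ v0 I k =
      ∑ k ∈ Finset.Icc 1 T, ifS θ w0 I k + 1 := by
  -- closed form for ifV
  have closed : ∀ (u0 : ℝ) (t : ℕ), ifV θ u0 I t =
      u0 + ∑ k ∈ Finset.Icc 1 t, I k - θ * ∑ k ∈ Finset.Icc 1 t, ifS θ u0 I k := by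
    intro u0 t
    induction t with
    | zero => simp [ifV]
    | succ n ih =>
      have h1 : (1:ℕ) ≤ n + 1 := Nat.succ_le_succ (Nat.zero_le n)
      rw [Finset.sum_Icc_succ_top h1, Finset.sum_Icc_succ_top h1]
      have hs : ifS θ u0 I (n + 1) = if θ ≤ ifV θ u0 I n + I (n + 1) then 1 else 0 := by
        simp [ifS]
      rw [ifV, hs, ih]
      split_ifs <;> ring
  have hVeq : ifV θ v0 I ts = ifV θ w0 I ts := by
    rw [closed, closed, hcount, hw]; ring
  -- equality of potentials for all times ≥ ts
  have hVd : ∀ d, ifV θ v0 I (ts + d) = ifV θ w0 I (ts + d) := by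
    intro d
    induction d with
    | zero => simpa using hVeq
    | succ n ih =>
      show ifV θ v0 I (ts + n + 1) = ifV θ w0 I (ts + n + 1)
      rw [ifV, ifV, ih]
  have hSeq : ∀ k, ts < k → ifS θ v0 I k = ifS θ w0 I k := by
    intro k hk
    obtain ⟨d, rfl⟩ : ∃ d, k = ts + d + 1 := by
      refine ⟨k - ts - 1, ?_⟩; omega
    have : ts + d + 1 - 1 = ts + d := by omega
    simp only [ifS, this, hVd d]
  refine ⟨by rw [hVeq], fun k hk _ => hSeq k hk, ?_⟩
  have htsT : ts ≤ T := (Finset.mem_Icc.mp hts).2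
  have hsplit : ∀ (u0 : ℝ), ∑ k ∈ Finset.Icc 1 T, ifS θ u0 I k =
      ∑ k ∈ Finset.Icc 1 ts, ifS θ u0 I k + ∑ k ∈ Finset.Ioc ts T, ifS θ u0 I k := by
    intro u0
    rw [show Finset.Icc 1 T = Finset.Ioc 0 T from Finset.Icc_add_one_left_eq_Ioc ..,
      show Finset.Icc 1 ts = Finset.Ioc 0 ts from Finset.Icc_add_one_left_eq_Ioc ..,
      ← Finset.sum_Ioc_consecutive _ (Nat.zero_le ts) htsT]
  rw [hsplit, hsplit, hcount]
  have : ∑ k ∈ Finset.Ioc ts T, ifS θ v0 I k = ∑ k ∈ Finset.Ioc ts T, ifS θ w0 I k := by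
    refine Finset.sum_congr rfl fun k hk => hSeq k (Finset.mem_Ioc.mp hk).1
  rw [this]; ring
end

section
/- Consider an IF neuron with threshold θ > 0, inputs I(1),...,I(T), spike train s and residual potentials v(t), firing at least one spike. Fix ε ∈ (0, θ) with θ < min{v(t):s(t)=1} + ε, and let the shifted neuron have ṽ(0) = v(0) - (min{v(t):s(t)=1} + ε). Suppose at some time t_s, ∑_{k=1}^{t_s} s(k) = ∑_{k=1}^{t_s} s̃(k) + 1, and let t' > t_s be any time with s(t') = 1 and ∑_{k=1}^{t'-1} s(k) = ∑_{k=1}^{t'-1} s̃(k) + 1. Then m̃(t') = v(t') - min{v(t):s(t)=1} - ε + 2θ > θ, hence s̃(t') = 1. -/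
open Finset

theorem stmt10 (θ : ℝ) (hθ : 0 < θ) (T : ℕ) (hT : 0 < T) (I : ℕ → ℝ)
    (v0 ε : ℝ) (hε : ε ∈ Set.Ioo 0 θ)
    (F : Finset ℕ)
    (hF : F = (Finset.Icc 1 T).filter (fun t => ifS θ v0 I t = 1))
    (hne : F.Nonempty)
    (vmin : ℝ) (hvmin : vmin = F.inf' hne (fun t => ifV θ v0 I t))
    (hbig : θ < vmin + ε)
    (w0 : ℝ) (hw : w0 = v0 - (vmin + ε))
    (ts : ℕ) (hts : ts ∈ Finset.Icc 1 T)
    (hcount : ∑ k ∈ Finset.Icc 1 ts, ifS θ v0 I k =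
      ∑ k ∈ Finset.Icc 1 ts, ifS θ w0 I k + 1)
    (t' : ℕ) (ht'1 : ts < t') (ht'2 : t' ≤ T)
    (hspike : ifS θ v0 I t' = 1)
    (hcount' : ∑ k ∈ Finset.Icc 1 (t' - 1), ifS θ v0 I k =
      ∑ k ∈ Finset.Icc 1 (t' - 1), ifS θ w0 I k + 1) :
    ifV θ w0 I (t' - 1) + I t' = ifV θ v0 I t' - vmin - ε + 2 * θ ∧
    θ < ifV θ w0 I (t' - 1) + I t' ∧
    ifS θ w0 I t' = 1 := by
  obtain ⟨hε0, hεθ⟩ := hε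
  have ht'pos : 1 ≤ t' := by
    have := (Finset.mem_Icc.mp hts).1; omega
  have hsub : t' - 1 + 1 = t' := by omega
  -- closed form for v
  have key : ∀ v0' t, ifV θ v0' I t = v0' + ∑ k ∈ Finset.Icc 1 t, I k
      - θ * ∑ k ∈ Finset.Icc 1 t, ifS θ v0' I k := by
    intro v0' t
    induction t with
    | zero => simp [ifV]
    | succ n ih =>
      rw [ifV, ih, Finset.sum_Icc_succ_top (by omega : 1 ≤ n + 1),
        Finset.sum_Icc_succ_top (by omega : 1 ≤ n + 1)]
    -- unfold ifS at position n+1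
      have : ifS θ v0' I (n + 1) =
          if θ ≤ ifV θ v0' I n + I (n + 1) then 1 else 0 := by
        simp [ifS]
      rw [this, ih]
      split <;> ring
  -- spike at t' means v(t'-1)+I(t') ≥ θ
  have hspike' : θ ≤ ifV θ v0 I (t' - 1) + I t' := by
    by_contra h
    simp [ifS, if_neg h] at hspike
  -- sum over Icc 1 t' splits
  have hsplit : ∀ f : ℕ → ℝ, ∑ k ∈ Finset.Icc 1 t', f k
      = ∑ k ∈ Finset.Icc 1 (t' - 1), f k + f t' := by
    intro f
    conv_lhs => rw [← hsub]
    rw [Finset.sum_Icc_succ_top (by omega : 1 ≤ t' - 1 + 1), hsub]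
  -- v(t') value
  have hvE : ifV θ v0 I t' = ifV θ v0 I (t' - 1) + I t' - θ := by
    conv_lhs => rw [← hsub]
    rw [ifV, hsub, if_pos hspike']
  -- main computation
  have hsum : ∑ k ∈ Finset.Icc 1 (t' - 1), ifS θ w0 I k
      = ∑ k ∈ Finset.Icc 1 (t' - 1), ifS θ v0 I k - 1 := by
    linarith [hcount']
  have heq : ifV θ w0 I (t' - 1) + I t' = ifV θ v0 I t' - vmin - ε + 2 * θ := by
    have h1 := key w0 (t' - 1)
    have h2 := key v0 t'
    rw [hsplit I, hsplit (ifS θ v0 I), hspike] at h2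
    rw [hsum] at h1
    rw [h1, hw]
    linarith
  -- t' ∈ F, so vmin ≤ v(t')
  have hmem : t' ∈ F := by
    rw [hF, Finset.mem_filter]
    exact ⟨Finset.mem_Icc.mpr ⟨ht'pos, ht'2⟩, hspike⟩
  have hge : vmin ≤ ifV θ v0 I t' := by
    rw [hvmin]
    exact Finset.inf'_le _ hmem
  have hgt : θ < ifV θ w0 I (t' - 1) + I t' := by
    rw [heq]; linarith
  refine ⟨heq, hgt, ?_⟩
  have : ifS θ w0 I t' = if θ ≤ ifV θ w0 I (t' - 1) + I t' then 1 else 0 := rfl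
  rw [this, if_pos hgt.le]
end

section
/- For any real number x, the quantity ⌊x + 1/2⌋ - (x + 1/2) lies in the interval (-1, 0]. Consequently, for an IF neuron with v(0) = θ/2, threshold θ > 0, total input S with -θ/2 ≤ S < θT + θ/2, the offset spike ψ = ⌊S/θ + 1/2⌋ - ∑_{t=1}^T s(t) satisfies v(T)/θ - 1 < ψ ≤ v(T)/θ, using the identity ψ = v(T)/θ + ⌊S/θ+1/2⌋ - (S/θ + 1/2). -/
open Finset

theorem stmt15 (θ : ℝ) (hθ : 0 < θ) (T : ℕ) (hT : 0 < T) (I : ℕ → ℝ)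
    (S ψ : ℝ) (hS : S = ∑ t ∈ Finset.Icc 1 T, I t)
    (hS1 : -θ / 2 ≤ S) (hS2 : S < θ * T + θ / 2)
    (hψ : ψ = (⌊S / θ + 1 / 2⌋ : ℝ) - ∑ t ∈ Finset.Icc 1 T, ifS θ (θ / 2) I t) :
    (∀ x : ℝ, -1 < (⌊x + 1 / 2⌋ : ℝ) - (x + 1 / 2) ∧
      (⌊x + 1 / 2⌋ : ℝ) - (x + 1 / 2) ≤ 0) ∧
    (ifV θ (θ / 2) I T / θ - 1 < ψ ∧ ψ ≤ ifV θ (θ / 2) I T / θ) := by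
  have key : ∀ x : ℝ, -1 < (⌊x + 1 / 2⌋ : ℝ) - (x + 1 / 2) ∧
      (⌊x + 1 / 2⌋ : ℝ) - (x + 1 / 2) ≤ 0 := by
    intro x
    constructor
    · linarith [Int.sub_one_lt_floor (x + 1/2), Int.lt_floor_add_one (x + 1/2)]
    · linarith [Int.floor_le (x + 1/2)]
  refine ⟨key, ?_, ?_⟩ <;>
  · have hv := ifV_eq θ (θ/2) I T
    rw [← hS] at hv
    have hsum : ∑ t ∈ Finset.Icc 1 T, ifS θ (θ/2) I t
        = (θ/2 + S - ifV θ (θ/2) I T) / θ := by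
      field_simp at hv ⊢; linarith
    have hψ' : ψ = ifV θ (θ/2) I T / θ + ((⌊S / θ + 1 / 2⌋ : ℝ) - (S / θ + 1 / 2)) := by
      rw [hψ, hsum]; field_simp; ring
    have := key (S / θ)
    rw [hψ']
    linarith [this.1, this.2]
end

section
/- Let θ > 0 and suppose an IF neuron with v(0) = θ/2 and threshold θ receives constant input I(t) = c at every step, with 0 ≤ c < θ. Then at every time t, the residual potential satisfies 0 ≤ v(t) < θ, and the total spike count over T steps is ∑_{t=1}^T s(t) = ⌊(θ/2 + cT)/θ⌋ = ⌊cT/θ + 1/2⌋, so the offset spike relative to the QCFS ANN output with L = T is zero. -/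
open Finset

lemma stmt17_main (θ c : ℝ) (hθ : 0 < θ) (hc0 : 0 ≤ c) (hcθ : c < θ)
    (I : ℕ → ℝ) (hI : ∀ t, I t = c) (t : ℕ) :
    (0 ≤ ifV θ (θ / 2) I t ∧ ifV θ (θ / 2) I t < θ) ∧
    ifV θ (θ / 2) I t = θ / 2 + c * t - θ * ∑ i ∈ Finset.Icc 1 t, ifS θ (θ / 2) I i := by
  induction t with
  | zero => simp [ifV]; constructor <;> linarith
  | succ n ih =>
    obtain ⟨⟨h0, h1⟩, heq⟩ := ih
    have hsum : ∑ i ∈ Finset.Icc 1 (n + 1), ifS θ (θ / 2) I i =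
        (∑ i ∈ Finset.Icc 1 n, ifS θ (θ / 2) I i) + ifS θ (θ / 2) I (n + 1) :=
      Finset.sum_Icc_succ_top (Nat.one_le_iff_ne_zero.mpr (Nat.succ_ne_zero n)) _
    have hS : ifS θ (θ / 2) I (n + 1) =
        if θ ≤ ifV θ (θ / 2) I n + I (n + 1) then 1 else 0 := by
      simp [ifS]
    rw [hsum, hS]
    simp only [ifV, hI, Nat.cast_succ]
    by_cases h : θ ≤ ifV θ (θ / 2) I n + c
    · simp only [if_pos h]
      refine ⟨⟨by linarith, by linarith⟩, by rw [heq]; ring⟩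
    · simp only [if_neg h]
      push_neg at h
      refine ⟨⟨by linarith, by linarith⟩, by rw [heq]; ring⟩

lemma stmt17_sum_nat (θ c : ℝ) (I : ℕ → ℝ) (t : ℕ) :
    ∃ n : ℕ, ∑ i ∈ Finset.Icc 1 t, ifS θ (θ / 2) I i = n := by
  induction t with
  | zero => exact ⟨0, by simp⟩
  | succ m ih =>
    obtain ⟨n, hn⟩ := ih
    rw [Finset.sum_Icc_succ_top (Nat.one_le_iff_ne_zero.mpr (Nat.succ_ne_zero m)), hn]
    unfold ifS
    by_cases h : θ ≤ ifV θ (θ / 2) I (m + 1 - 1) + I (m + 1)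
    · exact ⟨n + 1, by rw [if_pos h]; push_cast; ring⟩
    · exact ⟨n, by rw [if_neg h]; simp⟩

theorem stmt17 (θ c : ℝ) (hθ : 0 < θ) (hc0 : 0 ≤ c) (hcθ : c < θ)
    (T : ℕ) (hT : 0 < T) (I : ℕ → ℝ) (hI : ∀ t, I t = c) :
    (∀ t ≤ T, 0 ≤ ifV θ (θ / 2) I t ∧ ifV θ (θ / 2) I t < θ) ∧
    ∑ t ∈ Finset.Icc 1 T, ifS θ (θ / 2) I t = (⌊(θ / 2 + c * T) / θ⌋ : ℝ) ∧
    ⌊(θ / 2 + c * T) / θ⌋ = ⌊c * T / θ + 1 / 2⌋ := by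
  obtain ⟨⟨h0, h1⟩, heq⟩ := stmt17_main θ c hθ hc0 hcθ I hI T
  obtain ⟨n, hn⟩ := stmt17_sum_nat θ c I T
  have hfloor : ⌊(θ / 2 + c * T) / θ⌋ = (n : ℤ) := by
    rw [Int.floor_eq_iff]
    have hdiv : (θ / 2 + c * T) / θ = n + ifV θ (θ / 2) I T / θ := by
      rw [hn] at heq
      rw [heq]
      field_simp
      ring
    rw [hdiv]
    constructor
    · push_cast
      have : 0 ≤ ifV θ (θ / 2) I T / θ := div_nonneg h0 hθ.le
      linarith
    · push_cast
      have : ifV θ (θ / 2) I T / θ < 1 := (div_lt_one hθ).mpr h1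
      linarith
  refine ⟨fun t _ => (stmt17_main θ c hθ hc0 hcθ I hI t).1, ?_, ?_⟩
  · rw [hfloor, hn]; push_cast; ring
  · rw [hfloor]
    have : c * T / θ + 1 / 2 = (θ / 2 + c * T) / θ := by field_simp; ring
    rw [this, hfloor]
end

section
/- Let two IF neurons with the same threshold θ > 0 and the same inputs I(1),...,I(T) have initial potentials v(0) and ṽ(0) with ṽ(0) = v(0) + δ for some δ ≥ 0. Then for all t ∈ {0,1,...,T}: 0 ≤ θ·(∑_{k=1}^t s̃(k) - ∑_{k=1}^t s(k)) ≤ δ + θ, where s and s̃ are the respective spike trains. In particular the total spike counts differ by at most ⌈δ/θ⌉ + 1. -/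
open Finset

lemma key (θ : ℝ) (hθ : 0 < θ) (I : ℕ → ℝ) (v0 δ : ℝ) (hδ : 0 ≤ δ) :
    ∀ t : ℕ,
      (ifV θ (v0 + δ) I t - ifV θ v0 I t
        = δ - θ * (∑ k ∈ Finset.Icc 1 t, ifS θ (v0 + δ) I k -
            ∑ k ∈ Finset.Icc 1 t, ifS θ v0 I k))
      ∧ (∃ n : ℤ, (∑ k ∈ Finset.Icc 1 t, ifS θ (v0 + δ) I k -
            ∑ k ∈ Finset.Icc 1 t, ifS θ v0 I k) = n)
      ∧ 0 ≤ θ * (∑ k ∈ Finset.Icc 1 t, ifS θ (v0 + δ) I k -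
            ∑ k ∈ Finset.Icc 1 t, ifS θ v0 I k)
      ∧ θ * (∑ k ∈ Finset.Icc 1 t, ifS θ (v0 + δ) I k -
            ∑ k ∈ Finset.Icc 1 t, ifS θ v0 I k) ≤ δ + θ := by
  intro t
  induction t with
  | zero =>
    simp [ifV]
    exact ⟨⟨0, by simp⟩, by positivity⟩
  | succ t ih =>
    obtain ⟨heq, ⟨n, hn⟩, h0, h1⟩ := ih
    rw [Finset.sum_Icc_succ_top (by omega : 1 ≤ t + 1),
        Finset.sum_Icc_succ_top (by omega : 1 ≤ t + 1)]
    have hs1 : ifS θ v0 I (t + 1) = if θ ≤ ifV θ v0 I t + I (t + 1) then 1 else 0 := by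
      simp [ifS]
    have hs2 : ifS θ (v0 + δ) I (t + 1)
        = if θ ≤ ifV θ (v0 + δ) I t + I (t + 1) then 1 else 0 := by
      simp [ifS]
    have hexp : θ * (∑ k ∈ Finset.Icc 1 t, ifS θ (v0 + δ) I k -
        ∑ k ∈ Finset.Icc 1 t, ifS θ v0 I k)
      = θ * (∑ k ∈ Finset.Icc 1 t, ifS θ (v0 + δ) I k)
        - θ * (∑ k ∈ Finset.Icc 1 t, ifS θ v0 I k) := by ring
    by_cases hA : θ ≤ ifV θ v0 I t + I (t + 1) <;>
      by_cases hB : θ ≤ ifV θ (v0 + δ) I t + I (t + 1)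
    · rw [hs1, hs2, if_pos hA, if_pos hB]
      refine ⟨?_, ⟨n, by rw [← hn]; ring⟩, ?_, ?_⟩
      · simp only [ifV, if_pos hA, if_pos hB]
        ring_nf; ring_nf at heq hexp; linarith
      · ring_nf; ring_nf at hexp h0; linarith
      · ring_nf; ring_nf at hexp h1; linarith
    · -- v spikes, w doesn't : θ*D > δ ≥ 0 so D ≥ 1
      rw [hs1, hs2, if_pos hA, if_neg hB]
      push_neg at hB
      have hgt : δ < θ * (∑ k ∈ Finset.Icc 1 t, ifS θ (v0 + δ) I k -
          ∑ k ∈ Finset.Icc 1 t, ifS θ v0 I k) := by linarith [heq]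
      have hDpos : (0:ℝ) < ∑ k ∈ Finset.Icc 1 t, ifS θ (v0 + δ) I k -
          ∑ k ∈ Finset.Icc 1 t, ifS θ v0 I k := by nlinarith
      have hn1 : (1:ℤ) ≤ n := by
        have : (0:ℝ) < (n:ℝ) := by rw [← hn]; exact hDpos
        exact_mod_cast this
      have hD1 : (1:ℝ) ≤ ∑ k ∈ Finset.Icc 1 t, ifS θ (v0 + δ) I k -
          ∑ k ∈ Finset.Icc 1 t, ifS θ v0 I k := by
        rw [hn]; exact_mod_cast hn1
      have hθD : θ * 1 ≤ θ * (∑ k ∈ Finset.Icc 1 t, ifS θ (v0 + δ) I k -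
          ∑ k ∈ Finset.Icc 1 t, ifS θ v0 I k) :=
        mul_le_mul_of_nonneg_left hD1 hθ.le
      rw [mul_one, hexp] at hθD
      refine ⟨?_, ⟨n - 1, by push_cast; rw [← hn]; ring⟩, ?_, ?_⟩
      · simp only [ifV, if_pos hA, if_neg (not_le.mpr hB)]
        ring_nf; ring_nf at heq hexp; linarith
      · ring_nf; ring_nf at hθD; linarith
      · rw [hexp] at h1; ring_nf; ring_nf at h1; linarith
    · -- w spikes, v doesn't : θ*D < δ
      rw [hs1, hs2, if_neg hA, if_pos hB]
      push_neg at hA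
      have hlt : θ * (∑ k ∈ Finset.Icc 1 t, ifS θ (v0 + δ) I k -
          ∑ k ∈ Finset.Icc 1 t, ifS θ v0 I k) < δ := by linarith [heq]
      rw [hexp] at hlt h0
      refine ⟨?_, ⟨n + 1, by push_cast; rw [← hn]; ring⟩, ?_, ?_⟩
      · simp only [ifV, if_neg (not_le.mpr hA), if_pos hB]
        ring_nf; ring_nf at heq hexp; linarith
      · ring_nf; ring_nf at h0; linarith
      · ring_nf; ring_nf at hlt; linarith
    · rw [hs1, hs2, if_neg hA, if_neg hB]
      refine ⟨?_, ⟨n, by rw [← hn]; ring⟩, ?_, ?_⟩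
      · simp only [ifV, if_neg hA, if_neg hB]
        ring_nf; ring_nf at heq hexp; linarith
      · ring_nf; ring_nf at hexp h0; linarith
      · ring_nf; ring_nf at hexp h1; linarith

theorem stmt19 (θ : ℝ) (hθ : 0 < θ) (T : ℕ) (hT : 0 < T) (I : ℕ → ℝ)
    (v0 δ : ℝ) (hδ : 0 ≤ δ) (w0 : ℝ) (hw : w0 = v0 + δ) :
    (∀ t ≤ T,
      0 ≤ θ * (∑ k ∈ Finset.Icc 1 t, ifS θ w0 I k -
        ∑ k ∈ Finset.Icc 1 t, ifS θ v0 I k) ∧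
      θ * (∑ k ∈ Finset.Icc 1 t, ifS θ w0 I k -
        ∑ k ∈ Finset.Icc 1 t, ifS θ v0 I k) ≤ δ + θ) ∧
    ∑ k ∈ Finset.Icc 1 T, ifS θ w0 I k -
      ∑ k ∈ Finset.Icc 1 T, ifS θ v0 I k ≤ (⌈δ / θ⌉ : ℝ) + 1 := by
  subst hw
  constructor
  · intro t _
    obtain ⟨_, _, h0, h1⟩ := key θ hθ I v0 δ hδ t
    exact ⟨h0, h1⟩
  · obtain ⟨_, _, h0, h1⟩ := key θ hθ I v0 δ hδ T
    have hceil : δ / θ ≤ (⌈δ / θ⌉ : ℝ) := Int.le_ceil _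
    rw [div_le_iff₀ hθ] at hceil
    nlinarith
end
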